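/- arXiv:0904.0350 — 3 statements merged into one kernel-verified Lean document; each statement's English description precedes it below -/
import Mathlib

section
/- The stopping time τ = inf{n ≥ 1 : δ_n = 0} is almost surely finite; that is, with probability one a white ball is eventually drawn from the urn. -/
/-!
On the event `Aₙ` that the first `n` draws are all black, no white ball has been added yet, so
`Zₙ ≤ cₙ := (b + nβ) / (b + nβ + w) = 1 - w / (b + w + nβ)`. Since `Aₙ` is known at time `n`,
`P(Aₙ₊₁) = E[1_{Aₙ} Zₙ] ≤ cₙ P(Aₙ)`, so `P(Aₙ) ≤ ∏_{k<n} cₖ`, and this product tends to `0`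
because `∑ w / (b + w + kβ)` diverges like the harmonic series.
-/

open MeasureTheory ProbabilityTheory Filter Finset

/-- A two-color randomly reinforced urn (RRU): starting composition `b` black and `w` white
balls; at draw `n` (indexed from 0), `δ n = 1` if a black ball is drawn and `δ n = 0` if a
white ball is drawn; the drawn ball is returned together with `UB n` black balls (if black)
or `UW n` white balls (if white), the reinforcements being i.i.d., nonnegative, bounded by
`β`, with means `mB` and `mW`.  Given the past `F n`, the draw `δ n` is Bernoulli with
parameter `Z n = B n / (B n + W n)`, the current proportion of black balls. -/
structure RRU (Ω : Type) (m : MeasurableSpace Ω) (μ : Measure Ω) where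
  b : ℝ
  w : ℝ
  β : ℝ
  mB : ℝ
  mW : ℝ
  hb : 0 < b
  hw : 0 < w
  hβ : 0 < β
  hmB : 0 < mB
  hmW : 0 < mW
  δ : ℕ → Ω → ℝ
  UB : ℕ → Ω → ℝ
  UW : ℕ → Ω → ℝ
  F : Filtration ℕ m
  hδ01 : ∀ n ω, δ n ω = 0 ∨ δ n ω = 1
  hUB_bd : ∀ n ω, UB n ω ∈ Set.Icc 0 β
  hUW_bd : ∀ n ω, UW n ω ∈ Set.Icc 0 β
  hδ_adapted : ∀ n, Measurable[F (n + 1)] (δ n)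
  hUB_adapted : ∀ n, Measurable[F (n + 1)] (UB n)
  hUW_adapted : ∀ n, Measurable[F (n + 1)] (UW n)
  hUB_ident : ∀ i, IdentDistrib (UB i) (UB 0) μ μ
  hUW_ident : ∀ i, IdentDistrib (UW i) (UW 0) μ μ
  hUB_indep : iIndepFun (m := fun _ => Real.measurableSpace) UB μ
  hUW_indep : iIndepFun (m := fun _ => Real.measurableSpace) UW μ
  hUB_mean : ∀ i, ∫ ω, UB i ω ∂μ = mB
  hUW_mean : ∀ i, ∫ ω, UW i ω ∂μ = mW
  hU_indep_past : ∀ n,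
    Indep (F n) (MeasurableSpace.comap (fun ω => (UB n ω, UW n ω)) inferInstance) μ
  hcond : ∀ n, μ[δ n | F n] =ᵐ[μ] fun ω =>
    (b + ∑ i ∈ Finset.range n, δ i ω * UB i ω) /
      ((b + ∑ i ∈ Finset.range n, δ i ω * UB i ω) +
        (w + ∑ i ∈ Finset.range n, (1 - δ i ω) * UW i ω))

namespace RRU

variable {Ω : Type} {m : MeasurableSpace Ω} {μ : Measure Ω}

/-- Number of black balls in the urn after `n` draws. -/
noncomputable def B (r : RRU Ω m μ) (n : ℕ) (ω : Ω) : ℝ :=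
  r.b + ∑ i ∈ Finset.range n, r.δ i ω * r.UB i ω

/-- Number of white balls in the urn after `n` draws. -/
noncomputable def W (r : RRU Ω m μ) (n : ℕ) (ω : Ω) : ℝ :=
  r.w + ∑ i ∈ Finset.range n, (1 - r.δ i ω) * r.UW i ω

/-- Proportion of black balls in the urn after `n` draws. -/
noncomputable def Z (r : RRU Ω m μ) (n : ℕ) (ω : Ω) : ℝ := r.B n ω / (r.B n ω + r.W n ω)

/-- Number of black draws among the first `n` draws. -/
noncomputable def NB (r : RRU Ω m μ) (n : ℕ) (ω : Ω) : ℝ := ∑ i ∈ Finset.range n, r.δ i ω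

/-- Number of white draws among the first `n` draws. -/
noncomputable def NW (r : RRU Ω m μ) (n : ℕ) (ω : Ω) : ℝ := ∑ i ∈ Finset.range n, (1 - r.δ i ω)

end RRU

open Topology

lemma tendsto_sum_range_one_div_add_mul_atTop {p q : ℝ} (hp : 0 < p) (hq : 0 ≤ q) :
    Tendsto (fun n : ℕ => ∑ k ∈ range n, 1 / (p + k * q)) atTop atTop := by
  have hle : ∀ k : ℕ, 1 / (p + q) * (1 / ((k : ℝ) + 1)) ≤ 1 / (p + k * q) := by
    intro k
    rw [one_div_mul_one_div, one_div_le_one_div (by positivity) (by positivity)]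
    nlinarith [mul_nonneg hp.le (Nat.cast_nonneg (α := ℝ) k)]
  have hharm := Real.tendsto_sum_range_one_div_nat_succ_atTop.const_mul_atTop
    (by positivity : 0 < 1 / (p + q))
  refine tendsto_atTop_mono (fun n => ?_) hharm
  rw [mul_sum]
  exact sum_le_sum fun k _ => hle k

lemma tendsto_prod_range_one_sub_of_tendsto_sum {a : ℕ → ℝ} (ha : ∀ k, a k ≤ 1)
    (h : Tendsto (fun n => ∑ k ∈ range n, a k) atTop atTop) :
    Tendsto (fun n => ∏ k ∈ range n, (1 - a k)) atTop (𝓝 0) := by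
  have hexp : Tendsto (fun n => Real.exp (-∑ k ∈ range n, a k)) atTop (𝓝 0) :=
    Real.tendsto_exp_atBot.comp (tendsto_neg_atTop_atBot.comp h)
  refine tendsto_of_tendsto_of_tendsto_of_le_of_le tendsto_const_nhds hexp
    (fun n => prod_nonneg fun k _ => sub_nonneg.2 (ha k)) (fun n => ?_)
  calc ∏ k ∈ range n, (1 - a k) ≤ ∏ k ∈ range n, Real.exp (-a k) :=
        prod_le_prod (fun k _ => sub_nonneg.2 (ha k))
          (fun k _ => Real.one_sub_le_exp_neg (a k))
    _ = Real.exp (-∑ k ∈ range n, a k) := by rw [← sum_neg_distrib, Real.exp_sum]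

section FirstZero

variable {Ω : Type*} {m : MeasurableSpace Ω} {μ : Measure Ω} {F : Filtration ℕ m}
  {X : ℕ → Ω → ℝ} {c : ℕ → ℝ}

lemma measurableSet_forall_lt_eq_one (hX : ∀ n, Measurable[F (n + 1)] (X n)) (n : ℕ) :
    MeasurableSet[F n] {ω | ∀ i < n, X i ω = 1} := by
  simp only [Set.ofPred_forall]
  exact MeasurableSet.iInter fun i => MeasurableSet.iInter fun hi =>
    F.mono (Nat.succ_le_of_lt hi) _ (hX i (measurableSet_singleton 1))

lemma measureReal_forall_lt_succ_eq_one_le [IsFiniteMeasure μ]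
    (hX01 : ∀ n ω, X n ω = 0 ∨ X n ω = 1) (hX : ∀ n, Measurable[F (n + 1)] (X n)) (n : ℕ)
    (hc : ∀ᵐ ω ∂μ, (∀ i < n, X i ω = 1) → μ[X n | F n] ω ≤ c n) :
    μ.real {ω | ∀ i < n + 1, X i ω = 1} ≤ c n * μ.real {ω | ∀ i < n, X i ω = 1} := by
  set A := {ω | ∀ i < n, X i ω = 1}
  set T := {ω | X n ω = 1}
  have hA : MeasurableSet[F n] A := measurableSet_forall_lt_eq_one hX n
  have hT : MeasurableSet T := F.le (n + 1) _ (hX n (measurableSet_singleton 1))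
  have hXT : X n = T.indicator 1 := by
    funext ω
    rcases hX01 n ω with h | h <;> simp [T, h]
  have hsucc : {ω | ∀ i < n + 1, X i ω = 1} = T ∩ A := by
    ext ω
    simp only [Set.mem_ofPred_eq, Set.mem_inter_iff, T, A, Nat.lt_succ_iff_lt_or_eq]
    exact ⟨fun h => ⟨h n (Or.inr rfl), fun i hi => h i (Or.inl hi)⟩,
      fun ⟨hn, h⟩ i hi => hi.elim (h i) (fun e => e ▸ hn)⟩
  have hXint : Integrable (X n) μ := hXT ▸ (integrable_const (1 : ℝ)).indicator hT
  calc μ.real {ω | ∀ i < n + 1, X i ω = 1}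
      = ∫ ω in A, X n ω ∂μ := by
        rw [hsucc, hXT, integral_indicator_one hT, measureReal_restrict_apply hT]
    _ = ∫ ω in A, μ[X n | F n] ω ∂μ := (setIntegral_condExp (F.le n) hXint hA).symm
    _ ≤ ∫ ω in A, c n ∂μ :=
        setIntegral_mono_on_ae integrable_condExp.integrableOn (integrable_const _).integrableOn
          (F.le n _ hA) (hc.mono fun ω hω hωA => hω hωA)
    _ = c n * μ.real A := by rw [setIntegral_const, smul_eq_mul, mul_comm]

lemma measureReal_forall_lt_eq_one_le_prod [IsProbabilityMeasure μ]
    (hX01 : ∀ n ω, X n ω = 0 ∨ X n ω = 1) (hX : ∀ n, Measurable[F (n + 1)] (X n))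
    (hc0 : ∀ n, 0 ≤ c n) (hc : ∀ n, ∀ᵐ ω ∂μ, (∀ i < n, X i ω = 1) → μ[X n | F n] ω ≤ c n)
    (n : ℕ) : μ.real {ω | ∀ i < n, X i ω = 1} ≤ ∏ k ∈ range n, c k := by
  induction n with
  | zero => simp
  | succ n ih =>
    calc μ.real {ω | ∀ i < n + 1, X i ω = 1} ≤ c n * μ.real {ω | ∀ i < n, X i ω = 1} :=
          measureReal_forall_lt_succ_eq_one_le hX01 hX n (hc n)
      _ ≤ c n * ∏ k ∈ range n, c k := mul_le_mul_of_nonneg_left ih (hc0 n)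
      _ = ∏ k ∈ range (n + 1), c k := by rw [prod_range_succ, mul_comm]

theorem ae_exists_eq_zero_of_condExp_le [IsProbabilityMeasure μ]
    (hX01 : ∀ n ω, X n ω = 0 ∨ X n ω = 1) (hX : ∀ n, Measurable[F (n + 1)] (X n))
    (hc0 : ∀ n, 0 ≤ c n) (hc : ∀ n, ∀ᵐ ω ∂μ, (∀ i < n, X i ω = 1) → μ[X n | F n] ω ≤ c n)
    (hprod : Tendsto (fun n => ∏ k ∈ range n, c k) atTop (𝓝 0)) :
    ∀ᵐ ω ∂μ, ∃ n, X n ω = 0 := by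
  have hnull : μ.real {ω | ∀ i, X i ω = 1} = 0 := by
    refine le_antisymm (ge_of_tendsto' hprod fun n => ?_) measureReal_nonneg
    calc μ.real {ω | ∀ i, X i ω = 1} ≤ μ.real {ω | ∀ i < n, X i ω = 1} :=
          measureReal_mono fun ω hω i _ => hω i
      _ ≤ ∏ k ∈ range n, c k := measureReal_forall_lt_eq_one_le_prod hX01 hX hc0 hc n
  rw [measureReal_eq_zero_iff] at hnull
  exact ae_iff.2 <| measure_mono_null
    (fun ω hω i => (hX01 i ω).resolve_left fun h => hω ⟨i, h⟩) hnull

end FirstZero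

namespace RRU

variable {Ω : Type} {m : MeasurableSpace Ω} {μ : Measure Ω} (r : RRU Ω m μ)

noncomputable def blackBound (n : ℕ) : ℝ := (r.b + n * r.β) / (r.b + n * r.β + r.w)

lemma blackBound_eq_one_sub (n : ℕ) :
    r.blackBound n = 1 - r.w * (1 / (r.b + r.w + n * r.β)) := by
  have : 0 < r.b + n * r.β + r.w := by
    have := r.hb; have := r.hw; have := r.hβ; positivity
  rw [blackBound, eq_sub_iff_add_eq, mul_one_div, add_right_comm r.b r.w, ← add_div,
    div_self this.ne']

lemma blackBound_nonneg (n : ℕ) : 0 ≤ r.blackBound n := by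
  have := r.hb; have := r.hw; have := r.hβ
  unfold blackBound; positivity

lemma tendsto_prod_blackBound :
    Tendsto (fun n => ∏ k ∈ range n, r.blackBound k) atTop (𝓝 0) := by
  simp only [blackBound_eq_one_sub]
  refine tendsto_prod_range_one_sub_of_tendsto_sum
    (fun k => by linarith [r.blackBound_nonneg k, r.blackBound_eq_one_sub k]) ?_
  simp only [← mul_sum]
  exact (tendsto_sum_range_one_div_add_mul_atTop (add_pos r.hb r.hw) r.hβ.le).const_mul_atTop
    r.hw

lemma Z_le_blackBound {n : ℕ} {ω : Ω} (h : ∀ i < n, r.δ i ω = 1) : r.Z n ω ≤ r.blackBound n := by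
  have hW : r.W n ω = r.w := by
    rw [W, add_eq_left]
    exact sum_eq_zero fun i hi => by rw [h i (mem_range.1 hi)]; ring
  have hB : r.B n ω = r.b + ∑ i ∈ range n, r.UB i ω := by
    rw [B]
    exact congrArg _ (sum_congr rfl fun i hi => by rw [h i (mem_range.1 hi), one_mul])
  have hUB0 : 0 ≤ ∑ i ∈ range n, r.UB i ω := sum_nonneg fun i _ => (r.hUB_bd i ω).1
  have hUBβ : ∑ i ∈ range n, r.UB i ω ≤ n * r.β := by
    simpa using sum_le_sum fun i (_ : i ∈ range n) => (r.hUB_bd i ω).2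
  rw [Z, hW, hB, blackBound, div_le_div_iff₀ (by linarith [r.hb, r.hw]) (by linarith [r.hb, r.hw])]
  nlinarith [r.hw]

end RRU

/-- The stopping time `τ = inf {n ≥ 1 : δ_n = 0}` is almost surely finite:
with probability one a white ball is eventually drawn from the urn. -/
theorem rru_white_ball_eventually_drawn
    {Ω : Type} {m : MeasurableSpace Ω} {μ : Measure Ω} [IsProbabilityMeasure μ]
    (r : RRU Ω m μ) :
    ∀ᵐ ω ∂μ, ∃ n : ℕ, r.δ n ω = 0 :=
  ae_exists_eq_zero_of_condExp_le r.hδ01 r.hδ_adapted r.blackBound_nonneg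
    (fun n => (r.hcond n).mono fun _ hω hblack => hω ▸ r.Z_le_blackBound hblack)
    r.tendsto_prod_blackBound
end

section
/- In the randomly reinforced urn, both colors are drawn infinitely often almost surely: N_B(n) = Σ_{i≤n} δ_i → ∞ and N_W(n) = Σ_{i≤n} (1−δ_i) → ∞ almost surely as n → ∞. -/
open MeasureTheory ProbabilityTheory Filter Finset

section LevyBorelCantelli

variable {Ω : Type*} {m0 : MeasurableSpace Ω} {μ : Measure Ω} [IsFiniteMeasure μ]
  {ℱ : Filtration ℕ m0} {d : ℕ → Ω → ℝ} {R : NNReal}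

theorem ae_tendsto_sum_atTop_of_tendsto_sum_condExp
    (hd_nonneg : ∀ n ω, 0 ≤ d n ω) (hd_le : ∀ n ω, d n ω ≤ R)
    (hd : ∀ n, Measurable[ℱ (n + 1)] (d n))
    (h : ∀ᵐ ω ∂μ, Tendsto (fun n => ∑ k ∈ range n, μ[d k | ℱ k] ω) atTop atTop) :
    ∀ᵐ ω ∂μ, Tendsto (fun n => ∑ k ∈ range n, d k ω) atTop atTop := by
  set f : ℕ → Ω → ℝ := fun n ω => ∑ k ∈ range n, d k ω
  have hf_succ : ∀ n, f (n + 1) - f n = d n := fun n => by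
    funext ω; exact sum_range_succ_sub_sum _
  have hf_adapted : StronglyAdapted ℱ f := fun n =>
    (Finset.measurable_sum _ fun k hk =>
      (hd k).mono (ℱ.mono (Finset.mem_range.1 hk)) le_rfl).stronglyMeasurable
  have hf_int : ∀ n, Integrable (f n) μ := fun n =>
    integrable_finsetSum _ fun k _ =>
      .of_bound ((hd k).mono (ℱ.le _) le_rfl).aestronglyMeasurable R (.of_forall fun ω => by
        rw [Real.norm_eq_abs, abs_of_nonneg (hd_nonneg k ω)]; exact hd_le k ω)
  have key := tendsto_sum_indicator_atTop_iff (R := R)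
    (.of_forall fun ω n => by simpa [f, sum_range_succ] using hd_nonneg n ω) hf_adapted hf_int
    (.of_forall fun ω n => by
      rw [← Pi.sub_apply, hf_succ, abs_of_nonneg (hd_nonneg n ω)]; exact hd_le n ω)
  filter_upwards [key, h] with ω hω hω'
  refine hω.2 ?_
  simpa only [predictablePart, hf_succ, Finset.sum_apply] using hω'

theorem ae_tendsto_sum_atTop_of_le_condExp {ε : ℕ → ℝ}
    (hd_nonneg : ∀ n ω, 0 ≤ d n ω) (hd_le : ∀ n ω, d n ω ≤ R)
    (hd : ∀ n, Measurable[ℱ (n + 1)] (d n)) (hε : ∀ n, ∀ᵐ ω ∂μ, ε n ≤ μ[d n | ℱ n] ω)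
    (hε_sum : Tendsto (fun n => ∑ k ∈ range n, ε k) atTop atTop) :
    ∀ᵐ ω ∂μ, Tendsto (fun n => ∑ k ∈ range n, d k ω) atTop atTop := by
  refine ae_tendsto_sum_atTop_of_tendsto_sum_condExp hd_nonneg hd_le hd ?_
  filter_upwards [ae_all_iff.2 hε] with ω hω
  exact tendsto_atTop_mono (fun n => sum_le_sum fun k _ => hω k) hε_sum

end LevyBorelCantelli

theorem tendsto_sum_div_add_mul_atTop {a c β : ℝ} (ha : 0 < a) (hc : 0 < c) (hβ : 0 ≤ β) :
    Tendsto (fun n : ℕ => ∑ k ∈ range n, c / (a + β * k)) atTop atTop := by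
  set C := max a β
  have hC : 0 < C := lt_max_of_lt_left ha
  have hterm : ∀ k : ℕ, c / C * (1 / (k + 1)) ≤ c / (a + β * k) := fun k => by
    rw [div_mul_div_comm, mul_one]
    gcongr
    calc a + β * k ≤ C + C * k := by gcongr <;> simp [C]
      _ = C * (k + 1) := by ring
  refine tendsto_atTop_mono (fun n => ?_)
    (Real.tendsto_sum_range_one_div_nat_succ_atTop.const_mul_atTop (div_pos hc hC))
  rw [mul_sum]
  exact sum_le_sum fun k _ => hterm k

namespace RRU

variable {Ω : Type} {m : MeasurableSpace Ω} {μ : Measure Ω} (r : RRU Ω m μ)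

theorem δ_nonneg (n : ℕ) (ω : Ω) : 0 ≤ r.δ n ω := by
  rcases r.hδ01 n ω with h | h <;> simp [h]

theorem δ_le_one (n : ℕ) (ω : Ω) : r.δ n ω ≤ 1 := by
  rcases r.hδ01 n ω with h | h <;> simp [h]

theorem integrable_δ [IsFiniteMeasure μ] (n : ℕ) : Integrable (r.δ n) μ :=
  .of_bound ((r.hδ_adapted n).mono (r.F.le _) le_rfl).aestronglyMeasurable 1
    (.of_forall fun ω => by
      rw [Real.norm_eq_abs, abs_of_nonneg (r.δ_nonneg n ω)]; exact r.δ_le_one n ω)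

theorem b_le_B (n : ℕ) (ω : Ω) : r.b ≤ r.B n ω :=
  le_add_of_nonneg_right <| sum_nonneg fun i _ =>
    mul_nonneg (r.δ_nonneg i ω) (r.hUB_bd i ω).1

theorem w_le_W (n : ℕ) (ω : Ω) : r.w ≤ r.W n ω :=
  le_add_of_nonneg_right <| sum_nonneg fun i _ =>
    mul_nonneg (sub_nonneg.2 (r.δ_le_one i ω)) (r.hUW_bd i ω).1

theorem B_add_W_le (n : ℕ) (ω : Ω) : r.B n ω + r.W n ω ≤ r.b + r.w + r.β * n := by
  have hdraw : ∀ i, r.δ i ω * r.UB i ω + (1 - r.δ i ω) * r.UW i ω ≤ r.β := fun i => by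
    rcases r.hδ01 i ω with h | h
    · simpa [h] using (r.hUW_bd i ω).2
    · simpa [h] using (r.hUB_bd i ω).2
  have := sum_le_sum fun i (_ : i ∈ range n) => hdraw i
  simp only [sum_add_distrib, sum_const, card_range, nsmul_eq_mul] at this
  simp only [B, W]
  linarith

theorem B_add_W_pos (n : ℕ) (ω : Ω) : 0 < r.B n ω + r.W n ω :=
  add_pos (r.hb.trans_le (r.b_le_B n ω)) (r.hw.trans_le (r.w_le_W n ω))

theorem one_sub_Z (n : ℕ) (ω : Ω) : 1 - r.Z n ω = r.W n ω / (r.B n ω + r.W n ω) := by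
  rw [Z, eq_div_iff (r.B_add_W_pos n ω).ne', sub_mul, div_mul_cancel₀ _ (r.B_add_W_pos n ω).ne']
  ring

theorem div_le_Z (n : ℕ) (ω : Ω) : r.b / (r.b + r.w + r.β * n) ≤ r.Z n ω :=
  div_le_div₀ (r.hb.le.trans (r.b_le_B n ω)) (r.b_le_B n ω) (r.B_add_W_pos n ω)
    (r.B_add_W_le n ω)

theorem div_le_one_sub_Z (n : ℕ) (ω : Ω) : r.w / (r.b + r.w + r.β * n) ≤ 1 - r.Z n ω :=
  r.one_sub_Z n ω ▸ div_le_div₀ (r.hw.le.trans (r.w_le_W n ω)) (r.w_le_W n ω)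
    (r.B_add_W_pos n ω) (r.B_add_W_le n ω)

theorem condExp_δ (n : ℕ) : μ[r.δ n | r.F n] =ᵐ[μ] r.Z n := r.hcond n

theorem condExp_one_sub_δ [IsFiniteMeasure μ] (n : ℕ) :
    μ[fun ω => 1 - r.δ n ω | r.F n] =ᵐ[μ] fun ω => 1 - r.Z n ω := by
  have := condExp_sub (integrable_const 1) (r.integrable_δ n) (r.F n) (μ := μ)
  rw [condExp_const (r.F.le n)] at this
  filter_upwards [this, r.condExp_δ n] with ω h hZ
  rwa [Pi.sub_apply, hZ] at h

theorem ae_tendsto_NB [IsFiniteMeasure μ] : ∀ᵐ ω ∂μ, Tendsto (fun n => r.NB n ω) atTop atTop :=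
  ae_tendsto_sum_atTop_of_le_condExp (R := 1) r.δ_nonneg (by simpa using r.δ_le_one) r.hδ_adapted
    (fun n => (r.condExp_δ n).mono fun ω h => h ▸ r.div_le_Z n ω)
    (tendsto_sum_div_add_mul_atTop (add_pos r.hb r.hw) r.hb r.hβ.le)

theorem ae_tendsto_NW [IsFiniteMeasure μ] : ∀ᵐ ω ∂μ, Tendsto (fun n => r.NW n ω) atTop atTop :=
  ae_tendsto_sum_atTop_of_le_condExp (R := 1) (d := fun n ω => 1 - r.δ n ω)
    (fun n ω => sub_nonneg.2 (r.δ_le_one n ω)) (fun n ω => by simpa using r.δ_nonneg n ω)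
    (fun n => measurable_const.sub (r.hδ_adapted n))
    (fun n => (r.condExp_one_sub_δ n).mono fun ω h => h ▸ r.div_le_one_sub_Z n ω)
    (tendsto_sum_div_add_mul_atTop (add_pos r.hb r.hw) r.hw r.hβ.le)

end RRU

/-- In the randomly reinforced urn, both colors are drawn infinitely often
almost surely: `N_B(n) → ∞` and `N_W(n) → ∞` almost surely as `n → ∞`. -/
theorem rru_both_colors_drawn_infinitely_often
    {Ω : Type} {m : MeasurableSpace Ω} {μ : Measure Ω} [IsProbabilityMeasure μ]
    (r : RRU Ω m μ) :
    ∀ᵐ ω ∂μ, Tendsto (fun n => r.NB n ω) atTop atTop ∧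
      Tendsto (fun n => r.NW n ω) atTop atTop :=
  r.ae_tendsto_NB.and r.ae_tendsto_NW
end

section
/- The proportion of black draws N_B(n)/n converges almost surely to Z_∞, the almost sure limit of the urn proportions Z_n, and consequently N_W(n)/n converges almost surely to 1 − Z_∞. -/
open MeasureTheory ProbabilityTheory Filter Finset

/-! The number of black draws `N_B(n) = Σ_{i<n} δ_i` has Doob decomposition
`N_B(n) = M_n + Σ_{i<n} Z_i`, since `E[δ_i | F_i] = Z_i`. The martingale `M` has increments
bounded by `2`; being orthogonal in `L²`, they give `E[M_n²] ≤ 4n`. Hence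
`Σ_n E[(M_{n²}/n²)²] < ∞`, so `M_{n²}/n² → 0` a.s., and bounded increments fill the gaps
between consecutive squares: `M_n/n → 0` a.s. Cesàro's lemma turns `Z_n → Z_∞` into
`(1/n) Σ_{i<n} Z_i → Z_∞`, and `N_W(n) = n - N_B(n)`. -/

open Topology

lemma Nat.tendsto_sqrt_atTop : Tendsto Nat.sqrt atTop atTop :=
  tendsto_atTop_atTop.2 fun b => ⟨b ^ 2, fun k hk => by
    simpa [Nat.sqrt_eq'] using Nat.sqrt_le_sqrt hk⟩

lemma abs_sub_le_mul_of_abs_succ_sub_le {u : ℕ → ℝ} {R : ℝ} (hu : ∀ i, |u (i + 1) - u i| ≤ R)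
    {j k : ℕ} (hjk : j ≤ k) : |u k - u j| ≤ (k - j) * R := by
  calc |u k - u j| = dist (u j) (u k) := by rw [Real.dist_eq, abs_sub_comm]
    _ ≤ ∑ i ∈ Ico j k, dist (u i) (u (i + 1)) := dist_le_Ico_sum_dist u hjk
    _ ≤ #(Ico j k) • R := sum_le_card_nsmul _ _ _ fun i _ => by
      rw [Real.dist_eq, abs_sub_comm]; exact hu i
    _ = (k - j) * R := by simp [Nat.cast_sub hjk]

lemma abs_le_mul_of_abs_succ_sub_le {u : ℕ → ℝ} {R : ℝ} (hu : ∀ i, |u (i + 1) - u i| ≤ R)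
    (hu0 : u 0 = 0) (n : ℕ) : |u n| ≤ n * R := by
  simpa [hu0] using abs_sub_le_mul_of_abs_succ_sub_le hu (Nat.zero_le n)

lemma tendsto_div_atTop_zero_of_tendsto_sq {u : ℕ → ℝ} {R : ℝ}
    (hu : ∀ i, |u (i + 1) - u i| ≤ R)
    (hsq : Tendsto (fun n : ℕ => u (n ^ 2) / (n : ℝ) ^ 2) atTop (𝓝 0)) :
    Tendsto (fun n : ℕ => u n / n) atTop (𝓝 0) := by
  have hR : 0 ≤ R := (abs_nonneg _).trans (hu 0)
  have hbound : Tendsto (fun s : ℕ => |u (s ^ 2) / (s : ℝ) ^ 2| + 2 * R / s) atTop (𝓝 0) := by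
    simpa using hsq.abs.add (tendsto_const_div_atTop_nhds_zero_nat (2 * R))
  refine squeeze_zero_norm' ?_ (hbound.comp Nat.tendsto_sqrt_atTop)
  filter_upwards [eventually_ge_atTop 1] with k hk
  set s := Nat.sqrt k
  have hs : (1 : ℝ) ≤ s := by exact_mod_cast Nat.sqrt_pos.2 hk
  have hsk : ((s ^ 2 : ℕ) : ℝ) ≤ k := by exact_mod_cast Nat.sqrt_le' k
  have hks : (k : ℝ) ≤ s ^ 2 + 2 * s := by
    have := Nat.lt_succ_sqrt' k
    exact_mod_cast (by rw [Nat.succ_eq_add_one] at this; nlinarith : k ≤ s ^ 2 + 2 * s)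
  have hgap := abs_sub_le_mul_of_abs_succ_sub_le hu (Nat.sqrt_le' k)
  push_cast at hsk hgap
  have hk0 : (0 : ℝ) < k := by positivity
  rw [Function.comp_apply, Real.norm_eq_abs, abs_div, abs_div, abs_of_pos hk0,
    abs_of_pos (by positivity : (0 : ℝ) < (s : ℝ) ^ 2), div_le_iff₀ hk0]
  calc |u k| ≤ |u (s ^ 2)| + 2 * s * R := by
        have := abs_sub_abs_le_abs_sub (u k) (u (s ^ 2))
        nlinarith
    _ = (|u (s ^ 2)| / s ^ 2 + 2 * R / s) * s ^ 2 := by field_simp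
    _ ≤ (|u (s ^ 2)| / s ^ 2 + 2 * R / s) * k := by gcongr

lemma ae_tendsto_zero_of_summable_integral {Ω : Type*} {m0 : MeasurableSpace Ω} {μ : Measure Ω}
    {g : ℕ → Ω → ℝ} (hg_nonneg : ∀ n, 0 ≤ g n) (hg_int : ∀ n, Integrable (g n) μ)
    (hsum : Summable fun n => ∫ ω, g n ω ∂μ) :
    ∀ᵐ ω ∂μ, Tendsto (fun n => g n ω) atTop (𝓝 0) := by
  have hmeas : ∀ n, AEMeasurable (fun ω => ENNReal.ofReal (g n ω)) μ :=
    fun n => (hg_int n).aemeasurable.ennreal_ofReal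
  have hlint : ∫⁻ ω, ∑' n, ENNReal.ofReal (g n ω) ∂μ ≠ ⊤ := by
    rw [lintegral_tsum hmeas]
    simp_rw [← ofReal_integral_eq_lintegral_ofReal (hg_int _) (ae_of_all _ (hg_nonneg _)),
      ← ENNReal.ofReal_tsum_of_nonneg (fun n => integral_nonneg (hg_nonneg n)) hsum]
    exact ENNReal.ofReal_ne_top
  filter_upwards [ae_lt_top' (AEMeasurable.tsum hmeas) hlint] with ω hω
  have := (ENNReal.summable_toReal hω.ne).tendsto_atTop_zero
  simpa [ENNReal.toReal_ofReal (hg_nonneg _ ω)] using this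

namespace MeasureTheory.Martingale

variable {Ω : Type*} {m0 : MeasurableSpace Ω} {μ : Measure Ω}
  {ℱ : Filtration ℕ m0} {M : ℕ → Ω → ℝ} {R : ℝ}

lemma condExp_succ_sub_ae_eq_zero (hM : Martingale M ℱ μ) (n : ℕ) :
    μ[M (n + 1) - M n | ℱ n] =ᵐ[μ] 0 := by
  filter_upwards [condExp_sub (hM.integrable (n + 1)) (hM.integrable n) (ℱ n),
    hM.condExp_ae_eq n.le_succ, hM.condExp_ae_eq (le_refl n)] with ω h h₁ h₀
  simp [h, h₁, h₀]

lemma integral_mul_succ_sub_eq_zero [SigmaFiniteFiltration μ ℱ] (hM : Martingale M ℱ μ) {n : ℕ}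
    {f : Ω → ℝ} (hf : StronglyMeasurable[ℱ n] f) (hfM : Integrable (f * (M (n + 1) - M n)) μ) :
    ∫ ω, f ω * (M (n + 1) ω - M n ω) ∂μ = 0 := by
  calc ∫ ω, f ω * (M (n + 1) ω - M n ω) ∂μ = ∫ ω, μ[f * (M (n + 1) - M n) | ℱ n] ω ∂μ :=
        (integral_condExp (ℱ.le n)).symm
    _ = 0 := integral_eq_zero_of_ae <| by
        filter_upwards [condExp_mul_of_stronglyMeasurable_left hf hfM
          ((hM.integrable (n + 1)).sub (hM.integrable n)),
          hM.condExp_succ_sub_ae_eq_zero n] with ω h h₀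
        simp [h, h₀]

lemma integral_sq_succ [IsFiniteMeasure μ] (hM : Martingale M ℱ μ) {n : ℕ} {C : ℝ}
    (hMn : ∀ᵐ ω ∂μ, |M n ω| ≤ C) (hD : ∀ᵐ ω ∂μ, |M (n + 1) ω - M n ω| ≤ R) :
    ∫ ω, M (n + 1) ω ^ 2 ∂μ = ∫ ω, M n ω ^ 2 ∂μ + ∫ ω, (M (n + 1) ω - M n ω) ^ 2 ∂μ := by
  set D := M (n + 1) - M n
  have hD_int : Integrable D μ := (hM.integrable (n + 1)).sub (hM.integrable n)
  have hMn_meas := (hM.integrable n).aestronglyMeasurable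
  have hMD_int : Integrable (fun ω => 2 * (M n ω * D ω)) μ :=
    (hD_int.bdd_mul hMn_meas hMn).const_mul 2
  have hDD_int : Integrable (fun ω => D ω ^ 2) μ := by
    simpa only [sq] using hD_int.bdd_mul hD_int.1 hD
  have hMM_int : Integrable (fun ω => M n ω ^ 2) μ := by
    simpa only [sq] using (hM.integrable n).bdd_mul hMn_meas hMn
  have horth : ∫ ω, M n ω * D ω ∂μ = 0 :=
    hM.integral_mul_succ_sub_eq_zero (hM.stronglyMeasurable n) (hD_int.bdd_mul hMn_meas hMn)
  calc ∫ ω, M (n + 1) ω ^ 2 ∂μ = ∫ ω, M n ω ^ 2 + (2 * (M n ω * D ω) + D ω ^ 2) ∂μ := by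
        congr 1; ext ω; simp only [D, Pi.sub_apply]; ring
    _ = ∫ ω, M n ω ^ 2 ∂μ + ∫ ω, D ω ^ 2 ∂μ := by
        have hrest : Integrable (fun ω => 2 * (M n ω * D ω) + D ω ^ 2) μ := hMD_int.add hDD_int
        rw [integral_add hMM_int hrest, integral_add hMD_int hDD_int,
          integral_const_mul, horth, mul_zero, zero_add]

lemma integral_sq_le [IsFiniteMeasure μ] (hM : Martingale M ℱ μ) (hM0 : M 0 = 0)
    (hbdd : ∀ᵐ ω ∂μ, ∀ i, |M (i + 1) ω - M i ω| ≤ R) (n : ℕ) :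
    ∫ ω, M n ω ^ 2 ∂μ ≤ n * (R ^ 2 * μ.real Set.univ) := by
  induction n with
  | zero => simp [hM0]
  | succ n ih =>
    have hMn : ∀ᵐ ω ∂μ, |M n ω| ≤ n * R := by
      filter_upwards [hbdd] with ω hω
      exact abs_le_mul_of_abs_succ_sub_le (u := (M · ω)) hω (congrFun hM0 ω) n
    have hD : ∀ᵐ ω ∂μ, |M (n + 1) ω - M n ω| ≤ R := by filter_upwards [hbdd] with ω hω using hω n
    have hDD : ∫ ω, (M (n + 1) ω - M n ω) ^ 2 ∂μ ≤ R ^ 2 * μ.real Set.univ := by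
      calc ∫ ω, (M (n + 1) ω - M n ω) ^ 2 ∂μ ≤ ∫ _ω, R ^ 2 ∂μ := by
            refine integral_mono_of_nonneg (ae_of_all _ fun ω => sq_nonneg _)
              (integrable_const _) ?_
            filter_upwards [hD] with ω hω
            exact sq_le_sq' (abs_le.1 hω).1 (abs_le.1 hω).2
        _ = R ^ 2 * μ.real Set.univ := by simp [mul_comm]
    rw [hM.integral_sq_succ hMn hD]
    push_cast
    linarith

lemma integrable_sq [IsFiniteMeasure μ] (hM : Martingale M ℱ μ) (hM0 : M 0 = 0)
    (hbdd : ∀ᵐ ω ∂μ, ∀ i, |M (i + 1) ω - M i ω| ≤ R) (n : ℕ) :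
    Integrable (fun ω => M n ω ^ 2) μ := by
  have hMn : ∀ᵐ ω ∂μ, ‖M n ω‖ ≤ n * R := by
    filter_upwards [hbdd] with ω hω
    exact abs_le_mul_of_abs_succ_sub_le (u := (M · ω)) hω (congrFun hM0 ω) n
  simpa only [sq] using (hM.integrable n).bdd_mul (hM.integrable n).1 hMn

lemma ae_tendsto_div_sq_atTop_zero [IsFiniteMeasure μ] (hM : Martingale M ℱ μ) (hM0 : M 0 = 0)
    (hbdd : ∀ᵐ ω ∂μ, ∀ i, |M (i + 1) ω - M i ω| ≤ R) :
    ∀ᵐ ω ∂μ, Tendsto (fun n : ℕ => M (n ^ 2) ω / (n : ℝ) ^ 2) atTop (𝓝 0) := by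
  set c := R ^ 2 * μ.real Set.univ
  have hint : ∀ n : ℕ, Integrable (fun ω => (M (n ^ 2) ω / (n : ℝ) ^ 2) ^ 2) μ := fun n => by
    simpa only [div_pow] using (hM.integrable_sq hM0 hbdd (n ^ 2)).div_const (((n : ℝ) ^ 2) ^ 2)
  have hle : ∀ n : ℕ, ∫ ω, (M (n ^ 2) ω / (n : ℝ) ^ 2) ^ 2 ∂μ ≤ c / (n : ℝ) ^ 2 := by
    intro n
    calc ∫ ω, (M (n ^ 2) ω / (n : ℝ) ^ 2) ^ 2 ∂μ
        = (∫ ω, M (n ^ 2) ω ^ 2 ∂μ) / ((n : ℝ) ^ 2) ^ 2 := by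
          simp only [div_pow, integral_div]
      _ ≤ ((n ^ 2 : ℕ) * c) / ((n : ℝ) ^ 2) ^ 2 := by
          gcongr; exact hM.integral_sq_le hM0 hbdd _
      _ = c / (n : ℝ) ^ 2 := by
          rcases eq_or_ne n 0 with rfl | hn
          · simp
          · push_cast; field_simp
  have hsum : Summable fun n : ℕ => ∫ ω, (M (n ^ 2) ω / (n : ℝ) ^ 2) ^ 2 ∂μ := by
    refine Summable.of_nonneg_of_le (fun n => integral_nonneg fun ω => sq_nonneg _) hle ?_
    simpa [div_eq_mul_inv] using (Real.summable_nat_pow_inv.2 one_lt_two).mul_left c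
  filter_upwards [ae_tendsto_zero_of_summable_integral (fun n ω => sq_nonneg _) hint hsum]
    with ω hω
  have habs := hω.sqrt
  simp only [Real.sqrt_sq_eq_abs, Real.sqrt_zero] at habs
  exact (tendsto_zero_iff_abs_tendsto_zero _).2 habs

theorem ae_tendsto_div_atTop_zero [IsFiniteMeasure μ] (hM : Martingale M ℱ μ) (hM0 : M 0 = 0)
    (hbdd : ∀ᵐ ω ∂μ, ∀ i, |M (i + 1) ω - M i ω| ≤ R) :
    ∀ᵐ ω ∂μ, Tendsto (fun n : ℕ => M n ω / n) atTop (𝓝 0) := by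
  filter_upwards [hbdd, hM.ae_tendsto_div_sq_atTop_zero hM0 hbdd] with ω hω hsq
  exact tendsto_div_atTop_zero_of_tendsto_sq hω hsq

end MeasureTheory.Martingale

namespace RRU

variable {Ω : Type} {m : MeasurableSpace Ω} {μ : Measure Ω} (r : RRU Ω m μ)

lemma NB_zero : r.NB 0 = 0 := by
  ext ω; simp [NB]

lemma NB_succ_sub (n : ℕ) : r.NB (n + 1) - r.NB n = r.δ n := by
  ext ω; exact sum_range_succ_sub_sum _

lemma abs_NB_succ_sub_le_one (n : ℕ) (ω : Ω) : |r.NB (n + 1) ω - r.NB n ω| ≤ 1 := by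
  rw [← Pi.sub_apply, NB_succ_sub]
  rcases r.hδ01 n ω with h | h <;> simp [h]

lemma NW_eq_sub (n : ℕ) (ω : Ω) : r.NW n ω = n - r.NB n ω := by
  simp [NW, NB, sum_sub_distrib]

lemma stronglyAdapted_NB : StronglyAdapted r.F r.NB := fun _ =>
  (Finset.measurable_sum _ fun i hi =>
    (r.hδ_adapted i).mono (r.F.mono (mem_range.1 hi)) le_rfl).stronglyMeasurable

lemma integrable_NB [IsFiniteMeasure μ] (n : ℕ) : Integrable (r.NB n) μ := by
  refine Integrable.of_bound ((r.stronglyAdapted_NB n).mono (r.F.le n)).aestronglyMeasurable n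
    (ae_of_all _ fun ω => ?_)
  simpa using abs_le_mul_of_abs_succ_sub_le (u := (r.NB · ω)) (r.abs_NB_succ_sub_le_one · ω)
    (congrFun r.NB_zero ω) n

lemma ae_predictablePart_NB_eq :
    ∀ᵐ ω ∂μ, ∀ n, predictablePart r.NB r.F μ n ω = ∑ i ∈ range n, r.Z i ω := by
  refine ae_all_iff.2 fun n => ?_
  have h : predictablePart r.NB r.F μ n =ᵐ[μ] ∑ i ∈ range n, r.Z i := by
    simp only [predictablePart, NB_succ_sub]
    exact eventuallyEq_sum fun i _ => r.hcond i
  filter_upwards [h] with ω hω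
  simpa using hω

end RRU

/-- The proportion of black draws `N_B(n)/n` converges almost surely to
`Z∞`, the a.s. limit of the urn proportions `Z n`; consequently `N_W(n)/n → 1 - Z∞`
almost surely. -/
theorem rru_allocation_proportion_tendsto_Zinf
    {Ω : Type} {m : MeasurableSpace Ω} {μ : Measure Ω} [IsProbabilityMeasure μ]
    (r : RRU Ω m μ) (Zinf : Ω → ℝ)
    (hZinf : ∀ᵐ ω ∂μ, Tendsto (fun n => r.Z n ω) atTop (nhds (Zinf ω))) :
    ∀ᵐ ω ∂μ, Tendsto (fun n => r.NB n ω / n) atTop (nhds (Zinf ω)) ∧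
      Tendsto (fun n => r.NW n ω / n) atTop (nhds (1 - Zinf ω)) := by
  set M := martingalePart r.NB r.F μ
  have hM : Martingale M r.F μ := martingale_martingalePart r.stronglyAdapted_NB r.integrable_NB
  have hM0 : M 0 = 0 := by simp only [M, martingalePart_zero, r.NB_zero]
  have hbdd : ∀ᵐ ω ∂μ, ∀ i, |M (i + 1) ω - M i ω| ≤ 2 * 1 := by
    simpa only [Real.norm_eq_abs] using martingalePart_bdd_difference (f := r.NB) r.F
      (ae_of_all μ fun ω i => by simpa only [Real.norm_eq_abs] using r.abs_NB_succ_sub_le_one i ω)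
  filter_upwards [hZinf, hM.ae_tendsto_div_atTop_zero hM0 hbdd, r.ae_predictablePart_NB_eq]
    with ω hZ hMω hA
  have hNB : Tendsto (fun n => r.NB n ω / n) atTop (𝓝 (Zinf ω)) := by
    have hsum := hMω.add hZ.cesaro
    rw [zero_add] at hsum
    refine hsum.congr fun n => ?_
    rw [← congrFun (congrFun (martingalePart_add_predictablePart r.F μ r.NB) n) ω]
    simp [hA n, M, div_eq_inv_mul, mul_add]
  refine ⟨hNB, (tendsto_const_nhds.sub hNB).congr' ?_⟩
  filter_upwards [eventually_ne_atTop 0] with n hn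
  rw [r.NW_eq_sub, sub_div, div_self (Nat.cast_ne_zero.2 hn)]
end
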